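/- Let X be a finite set of distinct points in ℙ¹×ℙ¹ over k containing points P₁×Q₁ and P₂×Q₂ with P₁ ≠ P₂ and Q₁ ≠ Q₂ such that neither P₁×Q₂ nor P₂×Q₁ belongs to X. Suppose moreover that |X_{P₁,1}| > 1 and |X_{Q₁,2}| = 1. Then deg_X(P₁×Q₁) contains at least two elements. -/

import Mathlib

/-- `ℙ¹` over `k`, as the projectivization of `k²`. -/
abbrev Proj1 (k : Type*) [Field k] := Projectivization k (Fin 2 → k)

/-- The bigraded coordinate ring `R = k[x₀,x₁,y₀,y₁]` of `ℙ¹ × ℙ¹`,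
with the `x` variables indexed by `Sum.inl` and the `y` variables by `Sum.inr`. -/
abbrev BiPoly (k : Type*) [Field k] := MvPolynomial (Fin 2 ⊕ Fin 2) k

variable {k : Type*} [Field k]

/-- `F` is bihomogeneous of bidegree `d = (d₁, d₂)`: every monomial of `F` has total degree
`d₁` in `x₀,x₁` and total degree `d₂` in `y₀,y₁`. -/
def IsBihomogeneous (F : BiPoly k) (d : ℕ × ℕ) : Prop :=
  ∀ m ∈ F.support,
    (∑ i : Fin 2, m (Sum.inl i)) = d.1 ∧ (∑ i : Fin 2, m (Sum.inr i)) = d.2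

/-- `F` vanishes at the point `P` of `ℙ¹ × ℙ¹`, i.e. at every pair of representatives. -/
def VanishesAt (F : BiPoly k) (P : Proj1 k × Proj1 k) : Prop :=
  ∀ (p q : Fin 2 → k) (hp : p ≠ 0) (hq : q ≠ 0),
    Projectivization.mk k p hp = P.1 → Projectivization.mk k q hq = P.2 →
    MvPolynomial.eval (Sum.elim p q) F = 0

/-- `F` is a separator of `P` in `X` of bidegree `d`: it is bihomogeneous of bidegree `d`,
does not vanish at `P`, and vanishes at every other point of `X`. -/
def IsSeparator (X : Finset (Proj1 k × Proj1 k)) (P : Proj1 k × Proj1 k)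
    (F : BiPoly k) (d : ℕ × ℕ) : Prop :=
  IsBihomogeneous F d ∧ ¬ VanishesAt F P ∧ ∀ Q ∈ X, Q ≠ P → VanishesAt F Q

/-- The set of bidegrees of separators of `P` in `X`. -/
def sepDegrees (X : Finset (Proj1 k × Proj1 k)) (P : Proj1 k × Proj1 k) : Set (ℕ × ℕ) :=
  {d | ∃ F : BiPoly k, IsSeparator X P F d}

/-- `deg_X(P)`: the set of minimal elements, with respect to the componentwise partial
order on `ℕ × ℕ`, of the set of bidegrees of separators of `P` in `X`. -/
def degSet (X : Finset (Proj1 k × Proj1 k)) (P : Proj1 k × Proj1 k) : Set (ℕ × ℕ) :=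
  {d | d ∈ sepDegrees X P ∧ ∀ e ∈ sepDegrees X P, e ≤ d → e = d}

/-- The ideal `I_X` of all polynomials vanishing at (every representative of)
every point of `X`. -/
noncomputable def vanishingIdeal (X : Finset (Proj1 k × Proj1 k)) : Ideal (BiPoly k) where
  carrier := {F | ∀ P ∈ X, VanishesAt F P}
  zero_mem' := by
    intro P _ p q hp hq _ _
    simp
  add_mem' := by
    intro F G hF hG P hP p q hp hq h1 h2
    have h := hF P hP p q hp hq h1 h2
    have h' := hG P hP p q hp hq h1 h2
    simp [h, h']
  smul_mem' := by
    intro c F hF P hP p q hp hq h1 h2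
    have h := hF P hP p q hp hq h1 h2
    simp [smul_eq_mul, h]

/-- Property (*): whenever `P×Q, P'×Q' ∈ X` with `P ≠ P'` and `Q ≠ Q'`, at least one of
`P×Q'` and `P'×Q` is in `X`. -/
def PropertyStar (X : Finset (Proj1 k × Proj1 k)) : Prop :=
  ∀ P Q P' Q' : Proj1 k, (P, Q) ∈ X → (P', Q') ∈ X → P ≠ P' → Q ≠ Q' →
    (P, Q') ∈ X ∨ (P', Q) ∈ X

/-- The depth of a commutative ring `A` with respect to an ideal `m`: the supremum of the
lengths of regular sequences on `A` consisting of elements of `m`. -/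
noncomputable def depthWrt (A : Type*) [CommRing A] (m : Ideal A) : ℕ :=
  sSup {n | ∃ rs : List A, rs.length = n ∧ (∀ r ∈ rs, r ∈ m) ∧
    RingTheory.Sequence.IsRegular A rs}

/-- The irrelevant maximal ideal `(x₀,x₁,y₀,y₁)` of `R/I_X`. -/
noncomputable def irrelevantIdeal (X : Finset (Proj1 k × Proj1 k)) :
    Ideal (BiPoly k ⧸ vanishingIdeal X) :=
  (Ideal.span (Set.range (MvPolynomial.X : (Fin 2 ⊕ Fin 2) → BiPoly k))).map
    (Ideal.Quotient.mk (vanishingIdeal X))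

/-- `X` is arithmetically Cohen–Macaulay: `depth (R/I_X) = 2`. -/
def IsACM (X : Finset (Proj1 k × Proj1 k)) : Prop :=
  depthWrt (BiPoly k ⧸ vanishingIdeal X) (irrelevantIdeal X) = 2

open Classical in
/-- The number of points of `X` with first coordinate `P` (the cardinality of `X_{P,1}`). -/
noncomputable def fiber1Card (X : Finset (Proj1 k × Proj1 k)) (P : Proj1 k) : ℕ :=
  (X.filter fun T => T.1 = P).card

open Classical in
/-- The number of points of `X` with second coordinate `Q` (the cardinality of `X_{Q,2}`). -/
noncomputable def fiber2Card (X : Finset (Proj1 k × Proj1 k)) (Q : Proj1 k) : ℕ :=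
  (X.filter fun T => T.2 = Q).card

open Classical in
/-- The number of distinct first coordinates of points of `X`, i.e. `|π₁(X)|`. -/
noncomputable def proj1Card (X : Finset (Proj1 k × Proj1 k)) : ℕ :=
  (X.image Prod.fst).card

open Classical in
/-- The number of distinct second coordinates of points of `X`, i.e. `|π₂(X)|`. -/
noncomputable def proj2Card (X : Finset (Proj1 k × Proj1 k)) : ℕ :=
  (X.image Prod.snd).card

/-!
Only `P₁×Q₁` lies on the line `ℙ¹ × {Q₁}`, so the product of the linear forms in `y` vanishing
at the points of `T = π₂(X) \ {Q₁}` is a separator of `P₁×Q₁` of bidegree `(0, |T|)`. Conversely,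
a separator of bidegree `(0, s)` is a binary form in `y` alone which vanishes on `T` but not at
`Q₁`, hence `s ≥ |T|`. Trading the factor for `Q₂` for the linear forms in `x` vanishing at the
first coordinates of `X_{Q₂,2}` (none of which is `P₁`, since `P₁×Q₂ ∉ X`) gives a separator of
bidegree `(a, |T| - 1)`. A minimal bidegree below `(0, |T|)` has the form `(0, s)` with `s ≥ |T|`,
while one below `(a, |T| - 1)` has second entry `< |T|`: they are two distinct elements of
`deg_X(P₁×Q₁)`.
-/

open MvPolynomial Finset

lemma polynomial_eval_aeval {ι R : Type*} [CommSemiring R] (x : R) (σ : ι → Polynomial R)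
    (F : MvPolynomial ι R) : (aeval σ F).eval x = eval (fun i => (σ i).eval x) F := by
  rw [← Polynomial.coe_aeval_eq_eval, comp_aeval_apply]
  rfl

theorem natDegree_aeval_le_of_isWeightedHomogeneous {σ R : Type*} [CommSemiring R]
    {F : MvPolynomial σ R} {w : σ → ℕ} {n : ℕ} (hF : IsWeightedHomogeneous w F n)
    (g : σ → Polynomial R) (hg : ∀ i, (g i).natDegree ≤ w i) :
    (aeval g F).natDegree ≤ n := by
  rw [aeval_eq_eval₂Hom, coe_eval₂Hom, eval₂_eq]
  refine Polynomial.natDegree_sum_le_of_forall_le _ _ fun m hm => ?_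
  refine (Polynomial.natDegree_C_mul_le _ _).trans ?_
  calc (∏ i ∈ m.support, g i ^ m i).natDegree
      ≤ ∑ i ∈ m.support, m i * (g i).natDegree :=
        (Polynomial.natDegree_prod_le _ _).trans
          (sum_le_sum fun i _ => Polynomial.natDegree_pow_le)
    _ ≤ ∑ i ∈ m.support, m i • w i := sum_le_sum fun i _ => Nat.mul_le_mul_left _ (hg i)
    _ = n := hF (mem_support_iff.1 hm)

lemma mk_eq_mk_iff_det_eq_zero {p v : Fin 2 → k} (hp : p ≠ 0) (hv : v ≠ 0) :
    Projectivization.mk k p hp = Projectivization.mk k v hv ↔ v 1 * p 0 - v 0 * p 1 = 0 := by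
  rw [Projectivization.mk_eq_mk_iff' k p v hp hv]
  constructor
  · rintro ⟨a, rfl⟩
    simp only [Pi.smul_apply, smul_eq_mul]
    ring
  · intro h
    by_cases h0 : v 0 = 0
    · have h1 : v 1 ≠ 0 := fun h1 => hv (funext fun i => by fin_cases i <;> assumption)
      refine ⟨p 1 / v 1, funext fun i => ?_⟩
      fin_cases i
      · simp only [h0, zero_mul, sub_zero, mul_eq_zero, h1, false_or] at h
        simp [h, h0]
      · simp [h1]
    · refine ⟨p 0 / v 0, funext fun i => ?_⟩
      fin_cases i
      · simp [h0]
      · simp only [Fin.mk_one, Pi.smul_apply, smul_eq_mul]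
        field_simp
        linear_combination h

lemma exists_forall_rep_sub_mul_ne_zero [Infinite k] (S : Finset (Proj1 k)) :
    ∃ c : k, ∀ W ∈ S, W.rep 1 - c * W.rep 0 ≠ 0 := by
  classical
  obtain ⟨c, hc⟩ := Infinite.exists_notMem_finset (S.image fun W => W.rep 1 / W.rep 0)
  refine ⟨c, fun W hW h => ?_⟩
  by_cases h0 : W.rep 0 = 0
  · rw [h0, mul_zero, sub_zero] at h
    exact W.rep_nonzero (funext fun i => by fin_cases i <;> assumption)
  · exact hc (mem_image.2 ⟨W, hW, by rw [div_eq_iff h0]; linear_combination h⟩)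

lemma eq_smul_affineLine {v : Fin 2 → k} {c : k} (h : v 1 - c * v 0 ≠ 0) :
    v = (v 1 - c * v 0) • ![v 0 / (v 1 - c * v 0), c * (v 0 / (v 1 - c * v 0)) + 1] := by
  funext i
  fin_cases i
  · simp [mul_div_cancel₀ _ h]
  · simp only [Fin.mk_one, Pi.smul_apply, Matrix.cons_val_one, Matrix.cons_val_zero,
      smul_eq_mul]
    field_simp
    ring

def bidegWeight : Fin 2 ⊕ Fin 2 → ℕ × ℕ := Sum.elim (fun _ => (1, 0)) (fun _ => (0, 1))

lemma weight_bidegWeight (m : Fin 2 ⊕ Fin 2 →₀ ℕ) :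
    Finsupp.weight bidegWeight m = (∑ i, m (Sum.inl i), ∑ i, m (Sum.inr i)) := by
  simp [Finsupp.weight_eq_sum, Fintype.sum_sum_type, bidegWeight, Prod.ext_iff]

lemma isBihomogeneous_iff_isWeightedHomogeneous {F : BiPoly k} {d : ℕ × ℕ} :
    IsBihomogeneous F d ↔ IsWeightedHomogeneous bidegWeight F d := by
  simp only [IsBihomogeneous, IsWeightedHomogeneous, weight_bidegWeight, Prod.ext_iff,
    mem_support_iff]

namespace IsBihomogeneous

variable {F : BiPoly k} {d : ℕ × ℕ}

lemma isWeightedHomogeneous_snd (hF : IsBihomogeneous F d) :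
    IsWeightedHomogeneous (Prod.snd ∘ bidegWeight) F d.2 := by
  intro m hm
  simpa [Finsupp.weight_eq_sum, Fintype.sum_sum_type, bidegWeight] using
    (hF m (mem_support_iff.2 hm)).2

lemma eval_smul (hF : IsBihomogeneous F d) (a b : k) (p q : Fin 2 → k) :
    eval (Sum.elim (a • p) (b • q)) F = a ^ d.1 * b ^ d.2 * eval (Sum.elim p q) F := by
  rw [eval_eq', eval_eq', mul_sum]
  refine sum_congr rfl fun m hm => ?_
  simp only [Fintype.prod_sum_type, Sum.elim_inl, Sum.elim_inr, Pi.smul_apply, smul_eq_mul,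
    mul_pow, prod_mul_distrib, prod_pow_eq_pow_sum, (hF m hm).1, (hF m hm).2]
  ring

lemma vanishesAt_iff (hF : IsBihomogeneous F d) (P : Proj1 k × Proj1 k) :
    VanishesAt F P ↔ eval (Sum.elim P.1.rep P.2.rep) F = 0 := by
  refine ⟨fun h => h _ _ _ _ P.1.mk_rep P.2.mk_rep, fun h p q hp hq hpP hqP => ?_⟩
  obtain ⟨a, rfl⟩ := (Projectivization.mk_eq_mk_iff' k _ _ _ P.1.rep_nonzero).1
    (hpP.trans P.1.mk_rep.symm)
  obtain ⟨b, rfl⟩ := (Projectivization.mk_eq_mk_iff' k _ _ _ P.2.rep_nonzero).1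
    (hqP.trans P.2.mk_rep.symm)
  rw [hF.eval_smul, h, mul_zero]

lemma eval_indep_left {s : ℕ} (hF : IsBihomogeneous F (0, s)) (p p' q : Fin 2 → k) :
    eval (Sum.elim p q) F = eval (Sum.elim p' q) F := by
  rw [eval_eq', eval_eq']
  refine sum_congr rfl fun m hm => ?_
  have hx : ∀ i, m (Sum.inl i) = 0 := fun i => sum_eq_zero_iff.1 (hF m hm).1 i (mem_univ i)
  simp [Fintype.prod_sum_type, hx]

theorem card_le_snd [Infinite k] (hF : IsBihomogeneous F d) (p : Fin 2 → k) {Q : Proj1 k}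
    (hQ : eval (Sum.elim p Q.rep) F ≠ 0) {T : Finset (Proj1 k)}
    (hT : ∀ W ∈ T, eval (Sum.elim p W.rep) F = 0) : #T ≤ d.2 := by
  classical
  -- Restrict the binary form `F(p, -)` to an affine line meeting every point of `T ∪ {Q}`.
  obtain ⟨c, hc⟩ := exists_forall_rep_sub_mul_ne_zero (insert Q T)
  set ℓ : Proj1 k → k := fun W => W.rep 1 - c * W.rep 0
  set t : Proj1 k → k := fun W => W.rep 0 / ℓ W
  set g : Polynomial k := aeval (Sum.elim (fun i => Polynomial.C (p i))
    ![Polynomial.X, Polynomial.C c * Polynomial.X + 1]) F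
  have eval_g : ∀ x, g.eval x = eval (Sum.elim p (![x, c * x + 1] : Fin 2 → k)) F := by
    intro x
    rw [polynomial_eval_aeval]
    congr 2
    funext i
    rcases i with i | i
    · simp
    · fin_cases i <;> simp
  have eval_rep : ∀ W ∈ insert Q T, eval (Sum.elim p W.rep) F = ℓ W ^ d.2 * g.eval (t W) := by
    intro W hW
    rw [eval_g]
    conv_lhs =>
      rw [eq_smul_affineLine (hc W hW), ← one_smul k p, hF.eval_smul, one_pow, one_mul]
  have hg : g ≠ 0 := by
    rintro hg
    exact hQ (by rw [eval_rep Q (mem_insert_self Q T), hg, Polynomial.eval_zero, mul_zero])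
  have ht : Set.InjOn t T := by
    intro W hW W' hW' htW
    rw [← W.mk_rep, ← W'.mk_rep, mk_eq_mk_iff_det_eq_zero]
    rw [div_eq_div_iff (hc W (mem_insert_of_mem hW)) (hc W' (mem_insert_of_mem hW'))] at htW
    linear_combination htW
  have hroots : (T.image t).val ⊆ g.roots := by
    intro x hx
    obtain ⟨W, hW, rfl⟩ := mem_image.1 hx
    rw [Polynomial.mem_roots hg, Polynomial.IsRoot.def]
    have h := eval_rep W (mem_insert_of_mem hW)
    rw [hT W hW] at h
    exact (mul_eq_zero.1 h.symm).resolve_left (pow_ne_zero _ (hc W (mem_insert_of_mem hW)))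
  calc #T = #(T.image t) := (card_image_of_injOn ht).symm
    _ ≤ g.natDegree := Polynomial.card_le_degree_of_subset_roots hroots
    _ ≤ d.2 := by
      refine natDegree_aeval_le_of_isWeightedHomogeneous hF.isWeightedHomogeneous_snd _ ?_
      rintro (i | i)
      · simp [bidegWeight]
      · fin_cases i <;> simp [bidegWeight]; compute_degree

end IsBihomogeneous

noncomputable def linearFormX (v : Fin 2 → k) : BiPoly k :=
  C (v 1) * X (Sum.inl 0) - C (v 0) * X (Sum.inl 1)

noncomputable def linearFormY (v : Fin 2 → k) : BiPoly k :=
  C (v 1) * X (Sum.inr 0) - C (v 0) * X (Sum.inr 1)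

lemma isBihomogeneous_linearFormX (v : Fin 2 → k) : IsBihomogeneous (linearFormX v) (1, 0) :=
  isBihomogeneous_iff_isWeightedHomogeneous.2 <|
    ((isWeightedHomogeneous_X k bidegWeight (Sum.inl 0)).C_mul _).sub
      ((isWeightedHomogeneous_X k bidegWeight (Sum.inl 1)).C_mul _)

lemma isBihomogeneous_linearFormY (v : Fin 2 → k) : IsBihomogeneous (linearFormY v) (0, 1) :=
  isBihomogeneous_iff_isWeightedHomogeneous.2 <|
    ((isWeightedHomogeneous_X k bidegWeight (Sum.inr 0)).C_mul _).sub
      ((isWeightedHomogeneous_X k bidegWeight (Sum.inr 1)).C_mul _)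

lemma eval_linearFormX_eq_zero_iff {p : Fin 2 → k} (hp : p ≠ 0) (q : Fin 2 → k) (W : Proj1 k) :
    eval (Sum.elim p q) (linearFormX W.rep) = 0 ↔ Projectivization.mk k p hp = W := by
  conv_rhs => rw [← W.mk_rep, mk_eq_mk_iff_det_eq_zero]
  simp [linearFormX]

lemma eval_linearFormY_eq_zero_iff (p : Fin 2 → k) {q : Fin 2 → k} (hq : q ≠ 0) (W : Proj1 k) :
    eval (Sum.elim p q) (linearFormY W.rep) = 0 ↔ Projectivization.mk k q hq = W := by
  conv_rhs => rw [← W.mk_rep, mk_eq_mk_iff_det_eq_zero]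
  simp [linearFormY]

noncomputable def gridForm (A B : Finset (Proj1 k)) : BiPoly k :=
  (∏ P ∈ A, linearFormX P.rep) * ∏ Q ∈ B, linearFormY Q.rep

lemma isBihomogeneous_gridForm (A B : Finset (Proj1 k)) :
    IsBihomogeneous (gridForm A B) (#A, #B) := by
  have hA := IsWeightedHomogeneous.prod A _ (fun _ => ((1, 0) : ℕ × ℕ)) fun P _ =>
    isBihomogeneous_iff_isWeightedHomogeneous.1 (isBihomogeneous_linearFormX P.rep)
  have hB := IsWeightedHomogeneous.prod B _ (fun _ => ((0, 1) : ℕ × ℕ)) fun Q _ =>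
    isBihomogeneous_iff_isWeightedHomogeneous.1 (isBihomogeneous_linearFormY Q.rep)
  simpa [gridForm, isBihomogeneous_iff_isWeightedHomogeneous] using hA.mul hB

lemma vanishesAt_gridForm_iff {A B : Finset (Proj1 k)} {P : Proj1 k × Proj1 k} :
    VanishesAt (gridForm A B) P ↔ P.1 ∈ A ∨ P.2 ∈ B := by
  rw [(isBihomogeneous_gridForm A B).vanishesAt_iff]
  simp only [gridForm, map_mul, map_prod, mul_eq_zero, prod_eq_zero_iff,
    eval_linearFormX_eq_zero_iff P.1.rep_nonzero, eval_linearFormY_eq_zero_iff _ P.2.rep_nonzero,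
    Projectivization.mk_rep, exists_eq_right']

lemma isSeparator_gridForm {X : Finset (Proj1 k × Proj1 k)} {P : Proj1 k × Proj1 k}
    {A B : Finset (Proj1 k)} (hA : P.1 ∉ A) (hB : P.2 ∉ B)
    (hcover : ∀ Q ∈ X, Q ≠ P → Q.1 ∈ A ∨ Q.2 ∈ B) :
    IsSeparator X P (gridForm A B) (#A, #B) :=
  ⟨isBihomogeneous_gridForm A B, by simp [vanishesAt_gridForm_iff, hA, hB],
    fun Q hQ hQP => vanishesAt_gridForm_iff.2 (hcover Q hQ hQP)⟩

lemma card_erase_image_snd_le_of_isSeparator [Infinite k] [DecidableEq (Proj1 k)]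
    {X : Finset (Proj1 k × Proj1 k)} {P : Proj1 k × Proj1 k} {F : BiPoly k} {s : ℕ}
    (hF : IsSeparator X P F (0, s)) : #((X.image Prod.snd).erase P.2) ≤ s := by
  obtain ⟨hbih, hP, hX⟩ := hF
  refine hbih.card_le_snd P.1.rep (Q := P.2) (mt (hbih.vanishesAt_iff P).2 hP) fun W hW => ?_
  obtain ⟨hWP, hWX⟩ := mem_erase.1 hW
  obtain ⟨R, hR, rfl⟩ := mem_image.1 hWX
  rw [hbih.eval_indep_left P.1.rep R.1.rep]
  exact (hbih.vanishesAt_iff R).1 (hX R hR fun h => hWP (h ▸ rfl))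

lemma mem_degSet_iff_minimal {X : Finset (Proj1 k × Proj1 k)} {P : Proj1 k × Proj1 k}
    {d : ℕ × ℕ} : d ∈ degSet X P ↔ Minimal (· ∈ sepDegrees X P) d := by
  simp only [degSet, Set.mem_ofPred_eq, minimal_iff, eq_comm]

lemma snd_ne_of_fiber2Card_eq_one {X : Finset (Proj1 k × Proj1 k)} {P Q : Proj1 k}
    {R : Proj1 k × Proj1 k} (hQ : fiber2Card X Q = 1) (hPQ : (P, Q) ∈ X) (hR : R ∈ X)
    (hRPQ : R ≠ (P, Q)) : R.2 ≠ Q := by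
  classical
  unfold fiber2Card at hQ
  exact fun h => hRPQ (card_le_one.1 hQ.le R (mem_filter.2 ⟨hR, h⟩) _ (mem_filter.2 ⟨hPQ, rfl⟩))

theorem degree_nontrivial_of_not_star_case_two_general [CharZero k]
    (X : Finset (Proj1 k × Proj1 k)) (P₁ Q₁ P₂ Q₂ : Proj1 k)
    (h₁ : (P₁, Q₁) ∈ X) (h₂ : (P₂, Q₂) ∈ X) (hQ : Q₁ ≠ Q₂)
    (h₁₂ : (P₁, Q₂) ∉ X) (ha : fiber2Card X Q₁ = 1) :
    (degSet X (P₁, Q₁)).Nontrivial := by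
  classical
  set T := (X.image Prod.snd).erase Q₁
  have hT : ∀ R ∈ X, R ≠ (P₁, Q₁) → R.2 ∈ T := fun R hR hRP =>
    mem_erase.2 ⟨snd_ne_of_fiber2Card_eq_one ha h₁ hR hRP, mem_image_of_mem _ hR⟩
  have hQ₂T : Q₂ ∈ T := hT _ h₂ (by simp [hQ.symm])
  have hsep₁ := isSeparator_gridForm (X := X) (notMem_empty P₁) (notMem_erase Q₁ _)
    fun R hR hRP => Or.inr (hT R hR hRP)
  have hsep₂ := isSeparator_gridForm (X := X) (P := (P₁, Q₁))
    (A := (X.filter (·.2 = Q₂)).image Prod.fst) (B := T.erase Q₂)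
    (by simpa using h₁₂) (by simp [T]) fun R hR hRP => by
      by_cases h : R.2 = Q₂
      · exact Or.inl (mem_image_of_mem _ (mem_filter.2 ⟨hR, h⟩))
      · exact Or.inr (mem_erase.2 ⟨h, hT R hR hRP⟩)
  obtain ⟨⟨a, s⟩, hd₁, hmin₁⟩ :=
    exists_minimal_le_of_wellFoundedLT (· ∈ sepDegrees X (P₁, Q₁)) _ ⟨_, hsep₁⟩
  obtain ⟨d₂, hd₂, hmin₂⟩ :=
    exists_minimal_le_of_wellFoundedLT (· ∈ sepDegrees X (P₁, Q₁)) _ ⟨_, hsep₂⟩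
  obtain rfl : a = 0 := by simpa using hd₁.1
  obtain ⟨F, hF⟩ := hmin₁.1
  have hTs : #T ≤ s := card_erase_image_snd_le_of_isSeparator hF
  have hd₂T : d₂.2 < #T := hd₂.2.trans_lt (card_erase_lt_of_mem hQ₂T)
  refine ⟨_, mem_degSet_iff_minimal.2 hmin₁, d₂, mem_degSet_iff_minimal.2 hmin₂, ?_⟩
  rintro rfl
  exact hd₂T.not_ge hTs

/-- Case 2: if `X` fails property (*) at `P₁×Q₁`, `P₂×Q₂` and moreover
`|X_{P₁,1}| > 1` and `|X_{Q₁,2}| = 1`, then `deg_X(P₁×Q₁)` has at least two elements. -/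
theorem degree_nontrivial_of_not_star_case_two [IsAlgClosed k] [CharZero k]
    (X : Finset (Proj1 k × Proj1 k)) (P₁ Q₁ P₂ Q₂ : Proj1 k)
    (h₁ : (P₁, Q₁) ∈ X) (h₂ : (P₂, Q₂) ∈ X) (hP : P₁ ≠ P₂) (hQ : Q₁ ≠ Q₂)
    (h₁₂ : (P₁, Q₂) ∉ X) (h₂₁ : (P₂, Q₁) ∉ X)
    (hb : 1 < fiber1Card X P₁) (ha : fiber2Card X Q₁ = 1) :
    (degSet X (P₁, Q₁)).Nontrivial :=
  degree_nontrivial_of_not_star_case_two_general X P₁ Q₁ P₂ Q₂ h₁ h₂ hQ h₁₂ ha
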